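/- arXiv:0709.0309 — 6 statements merged into one kernel-verified Lean document; each statement's English description precedes it below -/
import Mathlib

section
/- Let A be an m×n real matrix with columns A₁,…,Aₙ, and define var(A) = (1/2)·max over j,k of ‖Aⱼ − Aₖ‖₁. If X ∈ ℝⁿ has entries summing to 0, then ‖AX‖₁ ≤ var(A)·‖X‖₁. -/
open Matrix Filter Topology

/-- The column variation of a real matrix: half the maximum ℓ¹-distance
between two columns. -/
noncomputable def var {m n : ℕ} (A : Matrix (Fin m) (Fin n) ℝ) : ℝ :=
  (1/2) * ⨆ j : Fin n, ⨆ k : Fin n, ∑ i, |A i j - A i k|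

theorem stmt0 {m n : ℕ} (A : Matrix (Fin m) (Fin n) ℝ) (X : Fin n → ℝ)
    (hX : ∑ j, X j = 0) :
    ∑ i, |A.mulVec X i| ≤ var A * ∑ j, |X j| := by
  set P : Fin n → ℝ := fun j => max (X j) 0 with hPdef
  set N : Fin n → ℝ := fun j => max (-X j) 0 with hNdef
  have hP0 : ∀ j, 0 ≤ P j := fun j => le_max_right _ _
  have hN0 : ∀ j, 0 ≤ N j := fun j => le_max_right _ _
  have hPN : ∀ j, X j = P j - N j := fun j =>
    (max_zero_sub_max_neg_zero_eq_self (X j)).symm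
  have habs : ∀ j, |X j| = P j + N j := fun j =>
    (max_zero_add_max_neg_zero_eq_abs_self (X j)).symm
  set S : ℝ := ∑ j, P j with hSdef
  have hS0 : 0 ≤ S := Finset.sum_nonneg fun j _ => hP0 j
  have hNS : ∑ j, N j = S := by
    have := hX
    simp only [hPN] at this
    rw [Finset.sum_sub_distrib, sub_eq_zero] at this
    exact this.symm
  have hXsum : ∑ j, |X j| = 2 * S := by
    simp only [habs, Finset.sum_add_distrib, hNS, ← hSdef]; ring
  -- column bound
  have hcol : ∀ j k : Fin n, ∑ i, |A i j - A i k| ≤ 2 * var A := by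
    intro j k
    have h1 : ∑ i, |A i j - A i k| ≤ ⨆ k' : Fin n, ∑ i, |A i j - A i k'| :=
      le_ciSup (f := fun k' => ∑ i, |A i j - A i k'|) (Finite.bddAbove_range _) k
    have h2 : (⨆ k' : Fin n, ∑ i, |A i j - A i k'|) ≤
        ⨆ j' : Fin n, ⨆ k' : Fin n, ∑ i, |A i j' - A i k'| :=
      le_ciSup (f := fun j' => ⨆ k' : Fin n, ∑ i, |A i j' - A i k'|)
        (Finite.bddAbove_range _) j
    have : 2 * var A = ⨆ j' : Fin n, ⨆ k' : Fin n, ∑ i, |A i j' - A i k'| := by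
      rw [var]; ring
    rw [this]
    exact h1.trans h2
  rcases eq_or_lt_of_le hS0 with hS | hS
  · -- S = 0 : X = 0
    have hXzero : ∀ j, X j = 0 := by
      intro j
      have hPz : P j = 0 := by
        have := (Finset.sum_eq_zero_iff_of_nonneg (fun j _ => hP0 j)).mp hS.symm
        exact this j (Finset.mem_univ j)
      have hNz : N j = 0 := by
        have := (Finset.sum_eq_zero_iff_of_nonneg (fun j _ => hN0 j)).mp
          (by rw [hNS, ← hS])
        exact this j (Finset.mem_univ j)
      rw [hPN j, hPz, hNz, sub_zero]
    have hXf : X = 0 := funext hXzero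
    simp [hXf, Matrix.mulVec_zero]
  · -- S > 0
    have key : ∀ i, S * A.mulVec X i = ∑ j, ∑ k, P j * N k * (A i j - A i k) := by
      intro i
      have hmv : A.mulVec X i = ∑ j, A i j * X j := by
        simp [Matrix.mulVec, dotProduct]
      rw [hmv]
      have e1 : ∑ j, ∑ k, P j * N k * (A i j - A i k)
          = (∑ j, P j * A i j) * (∑ k, N k) - (∑ j, P j) * (∑ k, N k * A i k) := by
        rw [Finset.sum_mul_sum, Finset.sum_mul_sum, ← Finset.sum_sub_distrib]
        refine Finset.sum_congr rfl fun j _ => ?_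
        rw [← Finset.sum_sub_distrib]
        exact Finset.sum_congr rfl fun k _ => by ring
      rw [e1, hNS, ← hSdef]
      simp only [hPN, Finset.mul_sum, Finset.sum_mul, ← Finset.sum_sub_distrib]
      exact Finset.sum_congr rfl fun j _ => by ring
    have main : S * (∑ i, |A.mulVec X i|) ≤ S * (var A * ∑ j, |X j|) := by
      calc S * ∑ i, |A.mulVec X i| = ∑ i, |S * A.mulVec X i| := by
            rw [Finset.mul_sum]
            exact Finset.sum_congr rfl fun i _ => by
              rw [abs_mul, abs_of_nonneg hS0]
        _ = ∑ i, |∑ j, ∑ k, P j * N k * (A i j - A i k)| := by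
            exact Finset.sum_congr rfl fun i _ => by rw [key i]
        _ ≤ ∑ i, ∑ j, ∑ k, P j * N k * |A i j - A i k| := by
            refine Finset.sum_le_sum fun i _ => ?_
            refine (Finset.abs_sum_le_sum_abs _ _).trans ?_
            refine Finset.sum_le_sum fun j _ => ?_
            refine (Finset.abs_sum_le_sum_abs _ _).trans ?_
            refine Finset.sum_le_sum fun k _ => ?_
            rw [abs_mul, abs_mul, abs_of_nonneg (hP0 j), abs_of_nonneg (hN0 k)]
        _ = ∑ j, ∑ k, P j * N k * ∑ i, |A i j - A i k| := by
            rw [Finset.sum_comm]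
            refine Finset.sum_congr rfl fun j _ => ?_
            rw [Finset.sum_comm]
            refine Finset.sum_congr rfl fun k _ => ?_
            rw [Finset.mul_sum]
        _ ≤ ∑ j, ∑ k, P j * N k * (2 * var A) := by
            refine Finset.sum_le_sum fun j _ => Finset.sum_le_sum fun k _ => ?_
            exact mul_le_mul_of_nonneg_left (hcol j k) (mul_nonneg (hP0 j) (hN0 k))
        _ = S * (var A * (2 * S)) := by
            have : (∑ j, P j) * (∑ k, N k) * (2 * var A)
                = ∑ j, ∑ k, P j * N k * (2 * var A) := by
              rw [Finset.sum_mul_sum, Finset.sum_mul]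
              exact Finset.sum_congr rfl fun j _ => by rw [Finset.sum_mul]
            rw [← this, hNS, ← hSdef]; ring
        _ = S * (var A * ∑ j, |X j|) := by rw [hXsum]
    exact le_of_mul_le_mul_left main hS
end

section
/- Let A be an m×l real matrix and B an l×n real matrix whose column sums are all equal to some constant b (B is of type b). Then var(AB) ≤ var(A)·var(B). -/
open Matrix Filter Topology

/-!
A vector `d` with `∑ i, d i = 0` splits as `d = d⁺ - d⁻` with `∑ d⁺ = ∑ d⁻ = s` and
`∑ |d i| = 2 s`, and then `s • d = ∑_{i,i'} (d i)⁺ (d i')⁻ (eᵢ - eᵢ')` is a nonnegative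
combination, of total weight `s²`, of differences of basis vectors. Hence `A *ᵥ d` is a
combination of differences of columns of `A`, each of ℓ¹-norm at most `2 var A`, so
`‖A *ᵥ d‖₁ ≤ var A · ‖d‖₁`. The difference of two columns of a matrix of type `b` has sum
zero, and `A` maps it to the difference of the corresponding columns of `A * B`.
-/

open Finset

section SumZero

variable {κ ι : Type*} [Fintype κ] [Fintype ι]

theorem sum_sum_mul_mul_sub (p q a : ι → ℝ) :
    ∑ i, ∑ i', p i * q i' * (a i - a i') =
      (∑ i, p i * a i) * ∑ i, q i - (∑ i, p i) * ∑ i, q i * a i := by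
  rw [sum_mul_sum, sum_mul_sum, ← sum_sub_distrib]
  refine sum_congr rfl fun i _ => ?_
  rw [← sum_sub_distrib]
  exact sum_congr rfl fun i' _ => by ring

theorem two_mul_sum_abs_mulVec_le_of_sum_eq_zero (A : Matrix κ ι ℝ) {c : ℝ}
    (hA : ∀ j k, ∑ r, |A r j - A r k| ≤ c) {d : ι → ℝ} (hd : ∑ i, d i = 0) :
    2 * ∑ r, |(A *ᵥ d) r| ≤ c * ∑ i, |d i| := by
  set s := ∑ i, (d i)⁺ with hs
  have hneg : ∑ i, (d i)⁻ = s := by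
    rw [← sum_congr rfl fun i _ => posPart_sub_negPart (d i), sum_sub_distrib] at hd
    linarith
  have habs : ∑ i, |d i| = 2 * s := by
    rw [← sum_congr rfl fun i _ => posPart_add_negPart (d i), sum_add_distrib, hneg]
    ring
  have hs0 : 0 ≤ s := sum_nonneg fun i _ => posPart_nonneg (d i)
  have hrow : ∀ r, s * (A *ᵥ d) r = ∑ i, ∑ i', (d i)⁺ * (d i')⁻ * (A r i - A r i') := by
    intro r
    have hd' : (A *ᵥ d) r = ∑ i, (d i)⁺ * A r i - ∑ i, (d i)⁻ * A r i := by
      rw [mulVec, dotProduct, ← sum_sub_distrib]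
      exact sum_congr rfl fun i _ => by rw [← sub_mul, posPart_sub_negPart, mul_comm]
    rw [sum_sum_mul_mul_sub, hneg, ← hs, hd']
    ring
  have hbound : s * ∑ r, |(A *ᵥ d) r| ≤ s * (s * c) :=
    calc s * ∑ r, |(A *ᵥ d) r|
        = ∑ r, |∑ i, ∑ i', (d i)⁺ * (d i')⁻ * (A r i - A r i')| := by
          rw [mul_sum]
          exact sum_congr rfl fun r _ => by rw [← hrow, abs_mul, abs_of_nonneg hs0]
      _ ≤ ∑ r, ∑ i, ∑ i', (d i)⁺ * (d i')⁻ * |A r i - A r i'| := by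
          refine sum_le_sum fun r _ => (abs_sum_le_sum_abs _ _).trans ?_
          refine sum_le_sum fun i _ => (abs_sum_le_sum_abs _ _).trans_eq ?_
          refine sum_congr rfl fun i' _ => ?_
          rw [abs_mul, abs_of_nonneg (mul_nonneg (posPart_nonneg _) (negPart_nonneg _))]
      _ = ∑ i, ∑ i', (d i)⁺ * (d i')⁻ * ∑ r, |A r i - A r i'| := by
          rw [sum_comm]
          refine sum_congr rfl fun i _ => ?_
          rw [sum_comm]
          simp only [mul_sum]
      _ ≤ ∑ i, ∑ i', (d i)⁺ * (d i')⁻ * c := by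
          gcongr with i _ i' _
          exact hA i i'
      _ = s * (s * c) := by
          rw [← mul_assoc]
          nth_rw 2 [← hneg]
          rw [hs, sum_mul_sum, sum_mul]
          simp only [sum_mul]
  rcases hs0.eq_or_lt with hs_zero | hs_pos
  · have hd_zero : d = 0 := by
      funext i
      rw [← hs_zero, mul_zero, sum_eq_zero_iff_of_nonneg fun i _ => abs_nonneg (d i)] at habs
      exact abs_eq_zero.mp (habs i (mem_univ i))
    simp [hd_zero]
  · rw [habs]
    nlinarith [le_of_mul_le_mul_left hbound hs_pos]

end SumZero

section Variation

variable {m n : ℕ}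

theorem var_nonneg (A : Matrix (Fin m) (Fin n) ℝ) : 0 ≤ var A :=
  mul_nonneg (by norm_num) <| Real.iSup_nonneg fun _ => Real.iSup_nonneg fun _ =>
    sum_nonneg fun _ _ => abs_nonneg _

theorem sum_abs_sub_le_two_mul_var (A : Matrix (Fin m) (Fin n) ℝ) (j k : Fin n) :
    ∑ i, |A i j - A i k| ≤ 2 * var A := by
  have h : ∑ i, |A i j - A i k| ≤ ⨆ j : Fin n, ⨆ k : Fin n, ∑ i, |A i j - A i k| :=
    le_ciSup_of_le (Set.finite_range _).bddAbove j <|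
      le_ciSup (f := fun k => ∑ i, |A i j - A i k|) (Set.finite_range _).bddAbove k
  rw [var]
  linarith

theorem var_le_of_sum_abs_sub_le {A : Matrix (Fin m) (Fin n) ℝ} {c : ℝ} (hc : 0 ≤ c)
    (h : ∀ j k, ∑ i, |A i j - A i k| ≤ 2 * c) : var A ≤ c := by
  have hsup : ⨆ j : Fin n, ⨆ k : Fin n, ∑ i, |A i j - A i k| ≤ 2 * c :=
    Real.iSup_le (fun j => Real.iSup_le (h j) (by positivity)) (by positivity)
  rw [var]
  linarith

end Variation

theorem stmt1 {m l n : ℕ} (A : Matrix (Fin m) (Fin l) ℝ)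
    (B : Matrix (Fin l) (Fin n) ℝ) (b : ℝ)
    (hB : ∀ k, ∑ i, B i k = b) :
    var (A * B) ≤ var A * var B := by
  refine var_le_of_sum_abs_sub_le (mul_nonneg (var_nonneg A) (var_nonneg B)) fun j k => ?_
  have hd : ∑ i, (B i j - B i k) = 0 := by rw [sum_sub_distrib, hB, hB, sub_self]
  have hcol : ∀ r, (A * B) r j - (A * B) r k = (A *ᵥ fun i => B i j - B i k) r := by
    intro r
    simp only [mul_apply, mulVec, dotProduct, mul_sub, sum_sub_distrib]
  have hA := two_mul_sum_abs_mulVec_le_of_sum_eq_zero A (sum_abs_sub_le_two_mul_var A) hd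
  calc ∑ r, |(A * B) r j - (A * B) r k|
      = ∑ r, |(A *ᵥ fun i => B i j - B i k) r| := by simp only [hcol]
    _ ≤ var A * ∑ i, |B i j - B i k| := by linarith
    _ ≤ var A * (2 * var B) := by
        gcongr
        exacts [var_nonneg A, sum_abs_sub_le_two_mul_var B j k]
    _ = 2 * (var A * var B) := by ring
end

section
/- Let a > 0 and let A be an m×n matrix with non-negative entries whose column sums all equal a. Then var(A) < a if and only if for every pair of columns k, l there exists a row index j such that both the (j,k) and (j,l) entries of A are positive. -/
/-!
For non-negative reals `|x - y| ≤ x + y`, with equality exactly when one of them vanishes.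
Summed over a pair of columns of type `a`, this gives `‖Aₖ - Aₗ‖₁ ≤ 2a`, with equality exactly
when the two columns have disjoint supports; since there are finitely many pairs of columns,
`var A < a` says that no pair attains `2a`.
-/

open Matrix Filter Topology

open Finset

lemma abs_sub_lt_add_iff {x y : ℝ} :
    |x - y| < x + y ↔ 0 < x ∧ 0 < y := by
  rw [abs_sub_lt_iff]
  constructor <;> rintro ⟨h₁, h₂⟩ <;> constructor <;> linarith

lemma sum_abs_sub_lt_sum_add_iff {ι : Type*} [Fintype ι] {x y : ι → ℝ}
    (hx : ∀ i, 0 ≤ x i) (hy : ∀ i, 0 ≤ y i) :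
    ∑ i, |x i - y i| < ∑ i, (x i + y i) ↔ ∃ i, 0 < x i ∧ 0 < y i := by
  constructor
  · intro hlt
    by_contra! hdisjoint
    refine hlt.not_ge (sum_le_sum fun i _ => not_lt.1 fun h => ?_)
    obtain ⟨hxi, hyi⟩ := abs_sub_lt_add_iff.1 h
    exact (hdisjoint i hxi).not_gt hyi
  · rintro ⟨i, hi⟩
    refine sum_lt_sum (fun j _ => abs_sub_le_iff.2 ⟨?_, ?_⟩) ⟨i, mem_univ i, ?_⟩
    · linarith [hy j]
    · linarith [hx j]
    · exact abs_sub_lt_add_iff.2 hi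

lemma ciSup_lt_iff_of_finite {ι α : Type*} [ConditionallyCompleteLinearOrder α] [Finite ι]
    [Nonempty ι] {f : ι → α} {a : α} : ⨆ i, f i < a ↔ ∀ i, f i < a := by
  refine ⟨fun h i => (le_ciSup (Finite.bddAbove_range f) i).trans_lt h, fun h => ?_⟩
  obtain ⟨i, hi⟩ := exists_eq_ciSup_of_finite (f := f)
  exact hi ▸ h i

lemma var_lt_iff {m n : ℕ} {A : Matrix (Fin m) (Fin n) ℝ} {c : ℝ} (hc : 0 < c) :
    var A < c ↔ ∀ j k, ∑ i, |A i j - A i k| < 2 * c := by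
  rcases isEmpty_or_nonempty (Fin n) with hn | hn
  · -- with no columns the supremum is the junk value `0`
    simp [var, Real.iSup_of_isEmpty, hc]
  · have hhalf : var A < c ↔ ⨆ j, ⨆ k, ∑ i, |A i j - A i k| < 2 * c := by
      unfold var
      constructor <;> intro h <;> linarith
    simp only [hhalf, ciSup_lt_iff_of_finite]

theorem stmt9 {m n : ℕ} (a : ℝ) (ha : 0 < a) (A : Matrix (Fin m) (Fin n) ℝ)
    (hpos : ∀ i j, 0 ≤ A i j) (hA : ∀ k, ∑ i, A i k = a) :
    var A < a ↔ ∀ k l : Fin n, ∃ j : Fin m, 0 < A j k ∧ 0 < A j l := by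
  rw [var_lt_iff ha]
  refine forall₂_congr fun k l => ?_
  have htwo : 2 * a = ∑ i, (A i k + A i l) := by
    rw [sum_add_distrib, hA, hA]
    ring
  rw [htwo]
  exact sum_abs_sub_lt_sum_add_iff (hpos · k) (hpos · l)
end

section
/- If M is a Markov matrix with Mᵖ entrywise positive for some p, and E is the vector with ME = E and entries summing to 1, then all entries of E are positive. -/
/-!
Both `E` and `|E|` are fixed by the positive column-stochastic matrix `A = Mᵖ`: entrywise
`|E| = |AE| ≤ A|E|`, and the two sides have the same total mass. Hence the positive part
`(|E| + E) / 2` is a nonnegative fixed vector of `A`; it is nonzero because `∑ E = 1`, and a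
nonzero nonnegative fixed vector of a matrix with positive entries is positive everywhere.
-/

open Matrix Filter Topology

namespace Matrix

variable {ι R : Type*} [Fintype ι]

section Semiring

variable [Semiring R] [DecidableEq ι] {M : Matrix ι ι R} {v : ι → R}

theorem pow_mulVec_eq_self (h : M *ᵥ v = v) (q : ℕ) : M ^ q *ᵥ v = v := by
  induction q with
  | zero => simp
  | succ q ih => rw [pow_succ', ← mulVec_mulVec, ih, h]

theorem vecMul_pow_eq_self (h : v ᵥ* M = v) (q : ℕ) : v ᵥ* M ^ q = v := by
  induction q with
  | zero => simp
  | succ q ih => rw [pow_succ, ← vecMul_vecMul, ih, h]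

end Semiring

theorem sum_mulVec_of_one_vecMul [Semiring R] {A : Matrix ι ι R} (hA : 1 ᵥ* A = 1)
    (v : ι → R) : ∑ i, (A *ᵥ v) i = ∑ i, v i := by
  rw [← one_dotProduct, dotProduct_mulVec, hA, one_dotProduct]

variable [Ring R] [LinearOrder R] [IsStrictOrderedRing R] {A : Matrix ι ι R} {v : ι → R}

theorem abs_mulVec_le (hA : ∀ i j, 0 ≤ A i j) (v : ι → R) (i : ι) :
    |(A *ᵥ v) i| ≤ (A *ᵥ |v|) i := by
  calc |(A *ᵥ v) i| ≤ ∑ j, |A i j * v j| := Finset.abs_sum_le_sum_abs _ _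
    _ = (A *ᵥ |v|) i := by simp [mulVec, dotProduct, abs_mul, abs_of_nonneg (hA i _)]

theorem mulVec_abs_eq_abs (hA : ∀ i j, 0 ≤ A i j) (hA1 : 1 ᵥ* A = 1) (hv : A *ᵥ v = v) :
    A *ᵥ |v| = |v| := by
  have hle : ∀ i ∈ Finset.univ, |v i| ≤ (A *ᵥ |v|) i := fun i _ => by
    simpa [hv] using abs_mulVec_le hA v i
  have hsum : ∑ i, |v i| = ∑ i, (A *ᵥ |v|) i := by
    rw [sum_mulVec_of_one_vecMul hA1]; rfl
  funext i
  exact ((Finset.sum_eq_sum_iff_of_le hle).mp hsum i (Finset.mem_univ i)).symm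

theorem pos_of_mulVec_eq_self (hA : ∀ i j, 0 < A i j) (hv0 : 0 ≤ v) (hv : A *ᵥ v = v)
    (hne : v ≠ 0) (i : ι) : 0 < v i := by
  obtain ⟨j, hj⟩ := Function.ne_iff.mp hne
  rw [← hv]
  exact Finset.sum_pos' (fun k _ => mul_nonneg (hA i k).le (hv0 k))
    ⟨j, Finset.mem_univ j, mul_pos (hA i j) ((hv0 j).lt_of_ne' hj)⟩

theorem pos_of_mulVec_eq_self_of_sum_pos (hA : ∀ i j, 0 < A i j) (hA1 : 1 ᵥ* A = 1)
    (hv : A *ᵥ v = v) (hsum : 0 < ∑ i, v i) (i : ι) : 0 < v i := by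
  have hw0 : 0 ≤ |v| + v := fun j => by
    simpa [Pi.abs_apply] using neg_le_iff_add_nonneg'.mp (neg_abs_le (v j))
  have hw : A *ᵥ (|v| + v) = |v| + v := by
    rw [mulVec_add, mulVec_abs_eq_abs (fun i j => (hA i j).le) hA1 hv, hv]
  have hne : |v| + v ≠ 0 := by
    intro h
    have := congrArg (fun w => ∑ j, w j) h
    simp only [Pi.add_apply, Pi.abs_apply, Finset.sum_add_distrib, Pi.zero_apply,
      Finset.sum_const_zero] at this
    exact (add_pos_of_nonneg_of_pos (Finset.sum_nonneg fun j _ => abs_nonneg (v j)) hsum).ne' this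
  have hi := pos_of_mulVec_eq_self hA hw0 hw hne i
  rw [Pi.add_apply, Pi.abs_apply] at hi
  by_contra! h
  exact hi.not_ge (by rw [abs_of_nonpos h, neg_add_cancel])

end Matrix

theorem stmt11_general {n : ℕ} (M : Matrix (Fin n) (Fin n) ℝ)
    (hM : ∀ k, ∑ i, M i k = 1)
    (p : ℕ) (hpos : ∀ i j, 0 < (M ^ p) i j)
    (E : Fin n → ℝ) (hE : M.mulVec E = E) (hEsum : ∑ j, E j = 1) :
    ∀ i, 0 < E i := by
  have hM1 : 1 ᵥ* M = 1 := funext fun k => by simp [vecMul, dotProduct, hM k]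
  exact pos_of_mulVec_eq_self_of_sum_pos hpos (vecMul_pow_eq_self hM1 p)
    (pow_mulVec_eq_self hE p) (hEsum ▸ one_pos)

theorem stmt11 {n : ℕ} (M : Matrix (Fin n) (Fin n) ℝ)
    (hnonneg : ∀ i j, 0 ≤ M i j) (hM : ∀ k, ∑ i, M i k = 1)
    (p : ℕ) (hp : 0 < p) (hpos : ∀ i j, 0 < (M ^ p) i j)
    (E : Fin n → ℝ) (hE : M.mulVec E = E) (hEsum : ∑ j, E j = 1) :
    ∀ i, 0 < E i :=
  stmt11_general M hM p hpos E hE hEsum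
end

section
/- Let A be an m×n real matrix with n ≥ 2. Then var(A) = max{ ‖AX‖₁ : X ∈ ℝⁿ, ‖X‖₁ = 1, ∑ⱼ xⱼ = 0 }. -/
open Matrix Filter Topology

lemma aux_le {m n : ℕ} (A : Matrix (Fin m) (Fin n) ℝ) (hn : 2 ≤ n) (j k : Fin n) :
    (∑ i, |A i j - A i k|) ≤ 2 * var A := by
  have hne : Nonempty (Fin n) := ⟨⟨0, by omega⟩⟩
  have hb : ∀ j : Fin n, BddAbove (Set.range fun k : Fin n => ∑ i, |A i j - A i k|) :=
    fun j => (Set.finite_range _).bddAbove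
  have hb2 : BddAbove (Set.range fun j : Fin n => ⨆ k : Fin n, ∑ i, |A i j - A i k|) :=
    (Set.finite_range _).bddAbove
  have h1 : (∑ i, |A i j - A i k|) ≤ ⨆ k : Fin n, ∑ i, |A i j - A i k| :=
    le_ciSup (hb j) k
  have h2 : (⨆ k : Fin n, ∑ i, |A i j - A i k|) ≤
      ⨆ j : Fin n, ⨆ k : Fin n, ∑ i, |A i j - A i k| := le_ciSup hb2 j
  have h := h1.trans h2
  unfold var; linarith

lemma aux_ex {m n : ℕ} (A : Matrix (Fin m) (Fin n) ℝ) (hn : 2 ≤ n) :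
    ∃ j k : Fin n, j ≠ k ∧ 2 * var A = ∑ i, |A i j - A i k| := by
  have hne : Nonempty (Fin n) := ⟨⟨0, by omega⟩⟩
  obtain ⟨⟨j0, k0⟩, hmax⟩ :=
    Finite.exists_max (fun p : Fin n × Fin n => ∑ i, |A i p.1 - A i p.2|)
  have hsup : 2 * var A = ∑ i, |A i j0 - A i k0| := by
    have hub : (⨆ j : Fin n, ⨆ k : Fin n, ∑ i, |A i j - A i k|) ≤ ∑ i, |A i j0 - A i k0| :=
      ciSup_le fun j => ciSup_le fun k => hmax (j, k)
    have hlb := aux_le A hn j0 k0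
    unfold var at *; linarith
  by_cases h : j0 = k0
  · have hz : (∑ i, |A i j0 - A i k0|) = 0 := by subst h; simp
    have hcard : 1 < Fintype.card (Fin n) := by simp; omega
    obtain ⟨j1, hj1⟩ := Fintype.exists_ne_of_one_lt_card hcard k0
    refine ⟨j1, k0, hj1, ?_⟩
    have h1 := hmax (j1, k0)
    have h2 : (0:ℝ) ≤ ∑ i, |A i j1 - A i k0| := Finset.sum_nonneg fun i _ => abs_nonneg _
    simp only at h1
    rw [hsup, hz]
    linarith [hz ▸ h1]
  · exact ⟨j0, k0, h, hsup⟩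

theorem stmt17 {m n : ℕ} (hn : 2 ≤ n) (A : Matrix (Fin m) (Fin n) ℝ) :
    IsGreatest
      { r : ℝ | ∃ X : Fin n → ℝ,
          (∑ j, |X j|) = 1 ∧ (∑ j, X j) = 0 ∧ r = ∑ i, |A.mulVec X i| }
      (var A) := by
  obtain ⟨j, k, hjk, hsup⟩ := aux_ex A hn
  constructor
  · -- membership
    refine ⟨fun l => if l = j then (1:ℝ)/2 else if l = k then -(1/2) else 0, ?_, ?_, ?_⟩
    · have : ∀ l : Fin n, |if l = j then (1:ℝ)/2 else if l = k then -(1/2) else 0| =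
          (if l = j then (1:ℝ)/2 else 0) + (if l = k then (1:ℝ)/2 else 0) := by
        intro l
        by_cases h1 : l = j
        · subst h1; simp [hjk]
        · by_cases h2 : l = k <;> norm_num [h1, h2, Ne.symm hjk]
      simp only [this, Finset.sum_add_distrib, Finset.sum_ite_eq', Finset.mem_univ, if_true]
      norm_num
    · have : ∀ l : Fin n, (if l = j then (1:ℝ)/2 else if l = k then -(1/2) else 0) =
          (if l = j then (1:ℝ)/2 else 0) + (if l = k then -(1:ℝ)/2 else 0) := by
        intro l
        by_cases h1 : l = j
        · subst h1; simp [hjk]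
        · by_cases h2 : l = k <;> norm_num [h1, h2, Ne.symm hjk]
      simp only [this, Finset.sum_add_distrib, Finset.sum_ite_eq', Finset.mem_univ, if_true]
      norm_num
    · have hrow : ∀ i, A.mulVec (fun l => if l = j then (1:ℝ)/2 else if l = k then -(1/2) else 0) i
          = (A i j - A i k) / 2 := by
        intro i
        simp only [Matrix.mulVec, dotProduct]
        have : ∀ l : Fin n, A i l * (if l = j then (1:ℝ)/2 else if l = k then -(1/2) else 0) =
            (if l = j then A i l * (1/2) else 0) + (if l = k then A i l * (-(1/2)) else 0) := by
          intro l
          by_cases h1 : l = j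
          · subst h1; simp [hjk]
          · by_cases h2 : l = k <;> norm_num [h1, h2, Ne.symm hjk]
        simp only [this, Finset.sum_add_distrib, Finset.sum_ite_eq', Finset.mem_univ, if_true]
        ring
      simp only [hrow]
      have : ∀ i : Fin m, |(A i j - A i k)/2| = |A i j - A i k| / 2 := by
        intro i; rw [abs_div]; norm_num
      simp only [this]
      rw [← Finset.sum_div]
      linarith
  · -- upper bound
    rintro r ⟨X, hX1, hX0, rfl⟩
    set p : Fin n → ℝ := fun l => max (X l) 0 with hp_def
    set q : Fin n → ℝ := fun l => max (-X l) 0 with hq_def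
    have hpq : ∀ l, X l = p l - q l := by
      intro l
      rcases le_total (X l) 0 with h | h
      · simp [hp_def, hq_def, max_eq_right h, max_eq_left (neg_nonneg.2 h)]
      · simp [hp_def, hq_def, max_eq_left h, max_eq_right (neg_nonpos.2 h)]
    have habs : ∀ l, |X l| = p l + q l := by
      intro l
      rcases le_total (X l) 0 with h | h
      · rw [abs_of_nonpos h]
        simp [hp_def, hq_def, max_eq_right h, max_eq_left (neg_nonneg.2 h)]
      · rw [abs_of_nonneg h]
        simp [hp_def, hq_def, max_eq_left h, max_eq_right (neg_nonpos.2 h)]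
    have hpnn : ∀ l, 0 ≤ p l := fun l => le_max_right _ _
    have hqnn : ∀ l, 0 ≤ q l := fun l => le_max_right _ _
    have hs1 : (∑ l, p l) - (∑ l, q l) = 0 := by
      rw [← Finset.sum_sub_distrib]
      rw [← hX0]; exact Finset.sum_congr rfl fun l _ => (hpq l).symm
    have hs2 : (∑ l, p l) + (∑ l, q l) = 1 := by
      rw [← Finset.sum_add_distrib]
      rw [← hX1]; exact Finset.sum_congr rfl fun l _ => (habs l).symm
    have hp2 : (∑ l, p l) = 1/2 := by linarith
    have hq2 : (∑ l, q l) = 1/2 := by linarith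
    -- row identity
    have key : ∀ i, A.mulVec X i = 2 * ∑ j', ∑ k', p j' * q k' * (A i j' - A i k') := by
      intro i
      have inner : ∀ j' : Fin n, (∑ k', p j' * q k' * (A i j' - A i k')) =
          p j' * A i j' * (1/2) - p j' * ∑ k', q k' * A i k' := by
        intro j'
        rw [← hq2, Finset.mul_sum, Finset.mul_sum, ← Finset.sum_sub_distrib]
        exact Finset.sum_congr rfl fun k' _ => by ring
      simp only [inner]
      rw [Finset.sum_sub_distrib, ← Finset.sum_mul, ← Finset.sum_mul, hp2]
      simp only [Matrix.mulVec, dotProduct]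
      have : (∑ j', A i j' * X j') = (∑ j', p j' * A i j') - (∑ j', q j' * A i j') := by
        rw [← Finset.sum_sub_distrib]
        exact Finset.sum_congr rfl fun l _ => by rw [hpq l]; ring
      rw [this]; ring
    calc (∑ i, |A.mulVec X i|)
        ≤ ∑ i, 2 * ∑ j', ∑ k', p j' * q k' * |A i j' - A i k'| := by
          apply Finset.sum_le_sum
          intro i _
          rw [key i, abs_mul, abs_of_nonneg (by norm_num : (0:ℝ) ≤ 2)]
          gcongr
          calc |∑ j', ∑ k', p j' * q k' * (A i j' - A i k')|
              ≤ ∑ j', |∑ k', p j' * q k' * (A i j' - A i k')| := Finset.abs_sum_le_sum_abs _ _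
            _ ≤ ∑ j', ∑ k', p j' * q k' * |A i j' - A i k'| := by
                apply Finset.sum_le_sum
                intro j' _
                calc |∑ k', p j' * q k' * (A i j' - A i k')|
                    ≤ ∑ k', |p j' * q k' * (A i j' - A i k')| := Finset.abs_sum_le_sum_abs _ _
                  _ = ∑ k', p j' * q k' * |A i j' - A i k'| := by
                      apply Finset.sum_congr rfl
                      intro k' _
                      rw [abs_mul, abs_mul, abs_of_nonneg (hpnn j'), abs_of_nonneg (hqnn k')]
      _ = 2 * ∑ j', ∑ k', p j' * q k' * ∑ i, |A i j' - A i k'| := by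
          rw [← Finset.mul_sum, Finset.sum_comm]
          congr 1
          apply Finset.sum_congr rfl; intro j' _
          rw [Finset.sum_comm]
          apply Finset.sum_congr rfl; intro k' _
          rw [Finset.mul_sum]
      _ ≤ 2 * ∑ j', ∑ k', p j' * q k' * (2 * var A) := by
          gcongr 2 * ∑ j', ∑ k', p j' * q k' * ?_ with j' _ k' _
          exact aux_le A hn j' k'
      _ = var A := by
          have h1 : ∀ j' : Fin n, (∑ k' : Fin n, p j' * q k' * (2 * var A)) =
              p j' * (1/2) * (2 * var A) := by
            intro j'
            rw [← Finset.sum_mul, ← Finset.mul_sum, hq2]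
          simp only [h1]
          rw [← Finset.sum_mul, ← Finset.sum_mul, hp2]
          ring
end

section
/- Let B be an m×n real matrix of type b with m ≥ 2. Then var(B) = max{ var(ZB) : Z a 1×m real row vector with var(Z) = 1 }. -/
open Matrix Filter Topology

private lemma le_ciSup'' {n : ℕ} (f : Fin n → ℝ) (j : Fin n) : f j ≤ ⨆ i, f i :=
  le_ciSup (Set.Finite.bddAbove (Set.finite_range f)) j

private lemma le_ciSup2 {n : ℕ} (f : Fin n → Fin n → ℝ) (j k : Fin n) :
    f j k ≤ ⨆ j, ⨆ k, f j k :=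
  le_trans (le_ciSup'' (f j) k) (le_ciSup'' (fun j => ⨆ k, f j k) j)

private lemma ciSup2_le {n : ℕ} (f : Fin n → Fin n → ℝ) {c : ℝ} (hc : 0 ≤ c)
    (h : ∀ j k, f j k ≤ c) : (⨆ j, ⨆ k, f j k) ≤ c := by
  rcases isEmpty_or_nonempty (Fin n) with he | hne
  · simpa [Real.iSup_of_isEmpty] using hc
  · exact ciSup_le fun j => ciSup_le fun k => h j k

private lemma exists_ciSup_eq {n : ℕ} [Nonempty (Fin n)] (f : Fin n → ℝ) :
    ∃ j, (⨆ i, f i) = f j := by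
  obtain ⟨j, -, hj⟩ := Finset.exists_mem_eq_sup' Finset.univ_nonempty f
  exact ⟨j, by rw [← Finset.sup'_univ_eq_ciSup, hj]⟩

private lemma exists_ciSup2_eq {n : ℕ} [Nonempty (Fin n)] (f : Fin n → Fin n → ℝ) :
    ∃ j k, (⨆ j, ⨆ k, f j k) = f j k := by
  obtain ⟨j, hj⟩ := exists_ciSup_eq (fun j => ⨆ k, f j k)
  obtain ⟨k, hk⟩ := exists_ciSup_eq (f j)
  exact ⟨j, k, by rw [hj, hk]⟩

/-- A ±1 row vector taking both values has variation 1. -/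
private lemma var_pm {m : ℕ} (Z : Matrix (Fin 1) (Fin m) ℝ)
    (h1 : ∀ i, Z 0 i = 1 ∨ Z 0 i = -1)
    (hp : ∃ i, Z 0 i = 1) (hq : ∃ i, Z 0 i = -1) : var Z = 1 := by
  obtain ⟨ip, hip⟩ := hp
  obtain ⟨iq, hiq⟩ := hq
  have habs : ∀ i, |Z 0 i| ≤ 1 := by
    intro i; rcases h1 i with h | h <;> simp [h]
  have hsup : (⨆ j : Fin m, ⨆ k : Fin m, ∑ i, |Z i j - Z i k|) = 2 := by
    apply le_antisymm
    · apply ciSup2_le _ (by norm_num)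
      intro j k
      have : |Z 0 j - Z 0 k| ≤ 2 := by
        calc |Z 0 j - Z 0 k| ≤ |Z 0 j| + |Z 0 k| := abs_sub _ _
        _ ≤ 1 + 1 := add_le_add (habs j) (habs k)
        _ = 2 := by norm_num
      simpa [Fin.sum_univ_one] using this
    · have h2 : (2:ℝ) = ∑ i : Fin 1, |Z i ip - Z i iq| := by
        simp [Fin.sum_univ_one, hip, hiq]; norm_num
      rw [h2]
      exact le_ciSup2 (fun j k => ∑ i, |Z i j - Z i k|) ip iq
  unfold var
  rw [hsup]
  norm_num

theorem stmt18 {m n : ℕ} (hm : 2 ≤ m) (B : Matrix (Fin m) (Fin n) ℝ) (b : ℝ)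
    (hB : ∀ k, ∑ i, B i k = b) :
    IsGreatest
      { r : ℝ | ∃ Z : Matrix (Fin 1) (Fin m) ℝ, var Z = 1 ∧ r = var (Z * B) }
      (var B) := by
  haveI : Nonempty (Fin m) := ⟨⟨0, by omega⟩⟩
  -- notation
  set S : Fin n → Fin n → ℝ := fun j k => ∑ i, |B i j - B i k| with hS
  have hSnonneg : ∀ j k, 0 ≤ S j k := fun j k =>
    Finset.sum_nonneg fun i _ => abs_nonneg _
  -- the row entries of Z * B
  have hmul : ∀ (Z : Matrix (Fin 1) (Fin m) ℝ) (j k : Fin n),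
      (Z * B) 0 j - (Z * B) 0 k = ∑ i, Z 0 i * (B i j - B i k) := by
    intro Z j k
    simp [Matrix.mul_apply, mul_sub, Finset.sum_sub_distrib]
  -- Upper bound: for any Z with var Z = 1, var (Z * B) ≤ var B
  have hub : ∀ Z : Matrix (Fin 1) (Fin m) ℝ, var Z = 1 → var (Z * B) ≤ var B := by
    intro Z hZ
    -- max and min entries of Z
    set M : ℝ := Finset.univ.sup' Finset.univ_nonempty (Z 0) with hM
    set L : ℝ := Finset.univ.inf' Finset.univ_nonempty (Z 0) with hL
    have hle : ∀ i, Z 0 i ≤ M := fun i => Finset.le_sup' _ (Finset.mem_univ i)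
    have hge : ∀ i, L ≤ Z 0 i := fun i => Finset.inf'_le _ (Finset.mem_univ i)
    have hML : M - L = 2 := by
      have hsup : (⨆ j : Fin m, ⨆ k : Fin m, ∑ i, |Z i j - Z i k|) = 2 := by
        have := hZ
        unfold var at this
        linarith
      have h1 : (⨆ j : Fin m, ⨆ k : Fin m, ∑ i, |Z i j - Z i k|) ≤ M - L := by
        apply ciSup2_le
        · obtain ⟨i⟩ := (inferInstance : Nonempty (Fin m))
          linarith [hle i, hge i]
        · intro j k
          have : |Z 0 j - Z 0 k| ≤ M - L := by
            rw [abs_sub_le_iff]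
            constructor <;> linarith [hle j, hge j, hle k, hge k]
          simpa [Fin.sum_univ_one] using this
      have h2 : M - L ≤ ⨆ j : Fin m, ⨆ k : Fin m, ∑ i, |Z i j - Z i k| := by
        obtain ⟨jM, -, hjM⟩ := Finset.exists_mem_eq_sup' Finset.univ_nonempty (Z 0)
        obtain ⟨kL, -, hkL⟩ := Finset.exists_mem_eq_inf' Finset.univ_nonempty (Z 0)
        have hv : M - L ≤ ∑ i : Fin 1, |Z i jM - Z i kL| := by
          have : M - L ≤ |Z 0 jM - Z 0 kL| := by
            rw [← hjM, ← hkL]; exact le_abs_self _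
          simpa [Fin.sum_univ_one] using this
        exact hv.trans (le_ciSup2 (fun j k => ∑ i, |Z i j - Z i k|) jM kL)
      linarith
    set c : ℝ := (M + L) / 2 with hc
    have hZc : ∀ i, |Z 0 i - c| ≤ 1 := by
      intro i
      rw [abs_le]
      constructor <;> [linarith [hge i]; linarith [hle i]]
    -- pointwise bound
    have hpt : ∀ j k, |(Z * B) 0 j - (Z * B) 0 k| ≤ S j k := by
      intro j k
      rw [hmul]
      have hzero : ∑ i, c * (B i j - B i k) = 0 := by
        rw [← Finset.mul_sum, Finset.sum_sub_distrib, hB j, hB k]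
        ring
      have heq : ∑ i, Z 0 i * (B i j - B i k)
          = ∑ i, (Z 0 i - c) * (B i j - B i k) := by
        rw [← sub_eq_zero, ← Finset.sum_sub_distrib]
        rw [← hzero]
        congr 1; funext i; ring
      rw [heq]
      calc |∑ i, (Z 0 i - c) * (B i j - B i k)|
          ≤ ∑ i, |(Z 0 i - c) * (B i j - B i k)| :=
            Finset.abs_sum_le_sum_abs _ _
        _ ≤ ∑ i, |B i j - B i k| := by
            apply Finset.sum_le_sum
            intro i _
            rw [abs_mul]
            calc |Z 0 i - c| * |B i j - B i k|
                ≤ 1 * |B i j - B i k| :=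
                  mul_le_mul_of_nonneg_right (hZc i) (abs_nonneg _)
              _ = |B i j - B i k| := one_mul _
    -- conclude
    unfold var
    apply mul_le_mul_of_nonneg_left _ (by norm_num : (0:ℝ) ≤ 1/2)
    rcases isEmpty_or_nonempty (Fin n) with he | hne
    · simp [Real.iSup_of_isEmpty]
    · apply ciSup2_le
      · obtain ⟨j⟩ := hne
        have := le_ciSup2 S j j
        have hjj : S j j = 0 := by simp [hS]
        linarith
      · intro j k
        have h1 : (∑ i : Fin 1, |(Z * B) i j - (Z * B) i k|)
            = |(Z * B) 0 j - (Z * B) 0 k| := by simp [Fin.sum_univ_one]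
        rw [h1]
        exact (hpt j k).trans (le_ciSup2 S j k)
  constructor
  · -- membership : exhibit Z achieving var B
    rcases isEmpty_or_nonempty (Fin n) with he | hne
    · -- n = 0 : var B = 0 and var (Z * B) = 0 for any Z; pick a ±1 vector
      refine ⟨Matrix.of fun _ i => if (i : ℕ) = 0 then (1:ℝ) else -1, ?_, ?_⟩
      · apply var_pm
        · intro i; by_cases h : (i : ℕ) = 0 <;> simp [Matrix.of_apply, h]
        · exact ⟨⟨0, by omega⟩, by simp [Matrix.of_apply]⟩
        · exact ⟨⟨1, by omega⟩, by simp [Matrix.of_apply]⟩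
      · unfold var
        rw [Real.iSup_of_isEmpty, Real.iSup_of_isEmpty]
    · -- n > 0 : take maximizing pair of columns
      obtain ⟨j0, k0, hjk⟩ := exists_ciSup2_eq S
      have hvarB : var B = (1/2) * S j0 k0 := by rw [var, hjk]
      have hdsum : ∑ i, (B i j0 - B i k0) = 0 := by
        rw [Finset.sum_sub_distrib, hB j0, hB k0]; ring
      by_cases hpos : 0 < S j0 k0
      · -- the interesting case: sign vector
        set Z : Matrix (Fin 1) (Fin m) ℝ :=
          Matrix.of fun _ i => if 0 ≤ B i j0 - B i k0 then (1:ℝ) else -1 with hZdef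
        have hZapp : ∀ i, Z 0 i = if 0 ≤ B i j0 - B i k0 then (1:ℝ) else -1 :=
          fun i => rfl
        have hZpm : ∀ i, Z 0 i = 1 ∨ Z 0 i = -1 := by
          intro i
          by_cases h : 0 ≤ B i j0 - B i k0
          · left; rw [hZapp, if_pos h]
          · right; rw [hZapp, if_neg h]
        -- there exist strictly positive and strictly negative differences
        have hexpos : ∃ i, 0 < B i j0 - B i k0 := by
          by_contra hcon
          push_neg at hcon
          have : S j0 k0 = 0 := by
            have h0 : ∀ i ∈ Finset.univ, |B i j0 - B i k0| = -(B i j0 - B i k0) := by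
              intro i _
              rcases lt_or_eq_of_le (hcon i) with h | h
              · exact abs_of_neg h
              · simp [h]
            rw [hS]
            calc ∑ i, |B i j0 - B i k0| = ∑ i, -(B i j0 - B i k0) :=
                  Finset.sum_congr rfl h0
              _ = -∑ i, (B i j0 - B i k0) := by rw [Finset.sum_neg_distrib]
              _ = 0 := by rw [hdsum]; ring
          linarith
        have hexneg : ∃ i, B i j0 - B i k0 < 0 := by
          by_contra hcon
          push_neg at hcon
          have : S j0 k0 = 0 := by
            have h0 : ∀ i ∈ Finset.univ, |B i j0 - B i k0| = B i j0 - B i k0 := by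
              intro i _; exact abs_of_nonneg (hcon i)
            rw [hS]
            calc ∑ i, |B i j0 - B i k0| = ∑ i, (B i j0 - B i k0) :=
                  Finset.sum_congr rfl h0
              _ = 0 := hdsum
          linarith
        obtain ⟨ip, hip⟩ := hexpos
        obtain ⟨iq, hiq⟩ := hexneg
        have hZvar : var Z = 1 := by
          apply var_pm _ hZpm
          · exact ⟨ip, by rw [hZapp, if_pos (le_of_lt hip)]⟩
          · exact ⟨iq, by rw [hZapp, if_neg (not_le.mpr hiq)]⟩
        refine ⟨Z, hZvar, ?_⟩
        -- var (Z * B) = var B : ≤ from hub, ≥ from the maximizing pair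
        have hkey : (Z * B) 0 j0 - (Z * B) 0 k0 = S j0 k0 := by
          rw [hmul, hS]
          apply Finset.sum_congr rfl
          intro i _
          by_cases h : 0 ≤ B i j0 - B i k0
          · rw [abs_of_nonneg h, hZapp, if_pos h, one_mul]
          · rw [abs_of_neg (not_le.mp h), hZapp, if_neg h]; ring
        have hge : var B ≤ var (Z * B) := by
          rw [hvarB]
          unfold var
          apply mul_le_mul_of_nonneg_left _ (by norm_num : (0:ℝ) ≤ 1/2)
          have h1 : S j0 k0 ≤ ∑ i : Fin 1, |(Z * B) i j0 - (Z * B) i k0| := by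
            have : S j0 k0 ≤ |(Z * B) 0 j0 - (Z * B) 0 k0| := by
              rw [hkey]; exact le_abs_self _
            simpa [Fin.sum_univ_one] using this
          exact h1.trans (le_ciSup2 (fun j k => ∑ i, |(Z * B) i j - (Z * B) i k|) j0 k0)
        exact le_antisymm hge (hub Z hZvar)
      · -- var B = 0 : every column distance is 0; any unit-variation Z works
        have hS0 : S j0 k0 = 0 := le_antisymm (not_lt.mp hpos) (hSnonneg j0 k0)
        have hvarB0 : var B = 0 := by rw [hvarB, hS0]; ring
        refine ⟨Matrix.of fun _ i => if (i : ℕ) = 0 then (1:ℝ) else -1, ?_, ?_⟩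
        · apply var_pm
          · intro i; by_cases h : (i : ℕ) = 0 <;> simp [Matrix.of_apply, h]
          · exact ⟨⟨0, by omega⟩, by simp [Matrix.of_apply]⟩
          · exact ⟨⟨1, by omega⟩, by simp [Matrix.of_apply]⟩
        · set Z : Matrix (Fin 1) (Fin m) ℝ :=
            Matrix.of fun _ i => if (i : ℕ) = 0 then (1:ℝ) else -1 with hZdef
          have hZvar : var Z = 1 := by
            apply var_pm
            · intro i; by_cases h : (i : ℕ) = 0 <;> simp [hZdef, Matrix.of_apply, h]
            · exact ⟨⟨0, by omega⟩, by simp [hZdef, Matrix.of_apply]⟩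
            · exact ⟨⟨1, by omega⟩, by simp [hZdef, Matrix.of_apply]⟩
          have h1 : var (Z * B) ≤ var B := hub Z hZvar
          have h2 : 0 ≤ var (Z * B) := by
            unfold var
            apply mul_nonneg (by norm_num)
            obtain ⟨j⟩ := hne
            have := le_ciSup2 (fun j k => ∑ i, |(Z * B) i j - (Z * B) i k|) j j
            simpa using this.trans' (by simp)
          rw [hvarB0]
          linarith [hvarB0 ▸ h1]
  · -- upper bound over the set
    rintro r ⟨Z, hZ, rfl⟩
    exact hub Z hZ
end
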